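/- In the setting of Theorem 1 (zero no-shows, uniform guarantee $W$, two-level idle time costs, $c_o = 0$), with ASAP appointment times $A_1 = 0$, $A_i = (\sum_{l=1}^{i-1}\sum_j \pi_{lj}\bar{p}_j - W)^+$ and $L = \sum_j \bar{p}_j - W + \epsilon$, the worst-case idle-time cost for a sequence $\pi$ equals $c_{l^*}\left( \sum_{i=1}^{l^*-1}\sum_j \pi_{ij}(\bar{p}_j - \ubar{p}_j) - W \right) + \sum_{i=l^*+1}^{n+1} c_i \sum_j \pi_{i-1,j}(\bar{p}_j - \ubar{p}_j) + c_{n+1}\epsilon$, where $l^*$ is the smallest index with $\sum_{i=1}^{l^*-1}\sum_j \pi_{ij}(\bar{p}_j - \ubar{p}_j) \ge W$. -/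
import Mathlib


/-- ASAP appointment times for sequence `σ` with uniform guarantee `W`
(zero no-shows), with `A (n+1) = L`. -/
noncomputable def asapA11 (n : ℕ) (hi : ℕ → ℝ) (W L : ℝ) (σ : ℕ → ℕ) (i : ℕ) : ℝ :=
  if i = n + 1 then L
  else max ((∑ k ∈ Finset.Icc 1 (i - 1), hi (σ k)) - W) 0

/-- Completion times under minimum service times for sequence `σ`. -/
noncomputable def ubC11 (n : ℕ) (lo hi : ℕ → ℝ) (W L : ℝ) (σ : ℕ → ℕ) : ℕ → ℝ
  | 0 => 0
  | i + 1 => max (asapA11 n hi W L σ (i + 1)) (ubC11 n lo hi W L σ i) + lo (σ (i + 1))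

private lemma max_arith0 (Lo D1 D2 l W : ℝ) (hLo : 0 ≤ Lo) (hm : D2 ≤ D1) :
    max (max ((Lo + D1) - W) 0) (Lo + max (D2 - W) 0) + l = (Lo + l) + max (D1 - W) 0 := by
  rcases le_total (D1 - W) 0 with h | h
  · rw [max_eq_right h, max_eq_right (by linarith : D2 - W ≤ (0:ℝ)),
      max_eq_right (max_le (by linarith) (by linarith) :
        max ((Lo + D1) - W) 0 ≤ Lo + 0)]
    ring
  · rw [max_eq_left h, max_eq_left (by linarith : (0:ℝ) ≤ (Lo + D1) - W)]
    rw [max_eq_left]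
    · ring
    · rcases le_total (D2 - W) 0 with h2 | h2
      · rw [max_eq_right h2]; linarith
      · rw [max_eq_left h2]; linarith

private lemma max_arith1 (Lo D1 D2 W : ℝ) (hLo : 0 ≤ Lo) (hD2W : D2 < W) :
    max (max ((Lo + D1) - W) 0 - (Lo + max (D2 - W) 0)) 0 = max (D1 - W) 0 := by
  rw [max_eq_right (by linarith : D2 - W ≤ (0:ℝ))]
  rcases le_total (D1 - W) 0 with h | h
  · rw [max_eq_right h]
    rcases le_total ((Lo + D1) - W) 0 with h2 | h2
    · rw [max_eq_right h2]; apply max_eq_right; linarith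
    · rw [max_eq_left h2]; apply max_eq_right; linarith
  · rw [max_eq_left h, max_eq_left (by linarith : (0:ℝ) ≤ (Lo + D1) - W),
      max_eq_left (by linarith : (0:ℝ) ≤ (Lo + D1) - W - (Lo + 0))]
    ring

private lemma max_arith2 (Lo D1 D2 W d : ℝ) (hLo : 0 ≤ Lo) (hWD2 : W ≤ D2)
    (hd : D1 = D2 + d) (hdpos : 0 ≤ d) :
    max (max ((Lo + D1) - W) 0 - (Lo + max (D2 - W) 0)) 0 = d := by
  rw [max_eq_left (by linarith : (0:ℝ) ≤ D2 - W),
    max_eq_left (by linarith : (0:ℝ) ≤ (Lo + D1) - W),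
    max_eq_left (by linarith : (0:ℝ) ≤ (Lo + D1) - W - (Lo + (D2 - W)))]
  linarith

private lemma max_arith3 (Lo D1 D2 W d e : ℝ) (hWD2 : W ≤ D2)
    (hd : D1 = D2 + d) (hdpos : 0 ≤ d) (he : 0 ≤ e) :
    max ((Lo + D1) - W + e - (Lo + max (D2 - W) 0)) 0 = d + e := by
  rw [max_eq_left (by linarith : (0:ℝ) ≤ D2 - W),
    max_eq_left (by linarith : (0:ℝ) ≤ (Lo + D1) - W + e - (Lo + (D2 - W)))]
  linarith

private lemma max_arith4 (Lo D1 D2 W e : ℝ) (hD2 : D2 < W) (hD1 : W ≤ D1) (he : 0 ≤ e) :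
    max ((Lo + D1) - W + e - (Lo + max (D2 - W) 0)) 0 = D1 - W + e := by
  rw [max_eq_right (by linarith : D2 - W ≤ (0:ℝ)),
    max_eq_left (by linarith : (0:ℝ) ≤ (Lo + D1) - W + e - (Lo + 0))]
  ring

private lemma sum_split (lo hi : ℕ → ℝ) (σ : ℕ → ℕ) (m : ℕ) :
    (∑ k ∈ Finset.Icc 1 m, hi (σ k)) =
      (∑ k ∈ Finset.Icc 1 m, lo (σ k)) + ∑ k ∈ Finset.Icc 1 m, (hi (σ k) - lo (σ k)) := by
  rw [← Finset.sum_add_distrib]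
  exact Finset.sum_congr rfl fun _ _ => by ring

private lemma D_mono (lo hi : ℕ → ℝ) (σ : ℕ → ℕ) (hlohi : ∀ j, lo j ≤ hi j)
    {a b : ℕ} (h : a ≤ b) :
    (∑ k ∈ Finset.Icc 1 a, (hi (σ k) - lo (σ k))) ≤
      ∑ k ∈ Finset.Icc 1 b, (hi (σ k) - lo (σ k)) :=
  Finset.sum_le_sum_of_subset_of_nonneg (Finset.Icc_subset_Icc_right h)
    (fun j _ _ => sub_nonneg.2 (hlohi (σ j)))

private lemma D_step (lo hi : ℕ → ℝ) (σ : ℕ → ℕ) {m : ℕ} (hm : 1 ≤ m) :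
    (∑ k ∈ Finset.Icc 1 m, (hi (σ k) - lo (σ k))) =
      (∑ k ∈ Finset.Icc 1 (m - 1), (hi (σ k) - lo (σ k))) + (hi (σ m) - lo (σ m)) := by
  obtain ⟨m', rfl⟩ : ∃ m', m = m' + 1 := ⟨m - 1, by omega⟩
  rw [Finset.sum_Icc_succ_top (by omega : 1 ≤ m' + 1)]
  simp

private lemma ubC_formula (n : ℕ) (lo hi : ℕ → ℝ) (W L : ℝ) (σ : ℕ → ℕ)
    (hlo : ∀ j, 0 ≤ lo j) (hlohi : ∀ j, lo j ≤ hi j) (hW : 0 ≤ W) :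
    ∀ i, 1 ≤ i → i ≤ n → ubC11 n lo hi W L σ i =
      (∑ k ∈ Finset.Icc 1 i, lo (σ k)) +
        max ((∑ k ∈ Finset.Icc 1 (i - 1), (hi (σ k) - lo (σ k))) - W) 0 := by
  intro i
  induction i with
  | zero => omega
  | succ k ih =>
    intro _ hkn
    rw [ubC11]
    rcases Nat.eq_zero_or_pos k with hk0 | hk1
    · subst hk0
      rw [ubC11, asapA11, if_neg (by omega)]
      simp only [Nat.sub_self, Nat.add_sub_cancel]
      rw [show Finset.Icc 1 0 = ∅ from Finset.Icc_eq_empty (by omega)]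
      simp only [Finset.sum_empty, Finset.Icc_self, Finset.sum_singleton, zero_sub]
      norm_num
      rw [max_eq_right (by linarith : -W ≤ (0:ℝ))]
      ring
    · rw [ih (by omega) (by omega), asapA11, if_neg (by omega)]
      simp only [Nat.add_sub_cancel]
      rw [Finset.sum_Icc_succ_top (by omega : 1 ≤ k + 1) (fun k => lo (σ k)),
        sum_split lo hi σ k]
      exact max_arith0 _ _ _ _ _ (Finset.sum_nonneg fun j _ => hlo (σ j))
        (D_mono lo hi σ hlohi (by omega))

/-- in the setting of Theorem 1 (zero no-shows, uniform guarantee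
`W`, two-level idle costs, `c_o = 0`), with ASAP times and
`L = ∑ p̄ - W + ε`, the worst-case idle-time cost of sequence `σ` equals
`c_{l*}(∑_{i<l*} d_i - W) + ∑_{i>l*} c_i d_{i-1} + c_{n+1} ε`, where
`d_i = p̄_{σ i} - p̲_{σ i}` and `l*` is the smallest index with
`∑_{i<l*} d_i ≥ W`. -/
theorem worst_case_idle_cost_closed_form
    (n : ℕ) (σ : ℕ → ℕ) (hbij : Set.BijOn σ (Set.Icc 1 n) (Set.Icc 1 n))
    (lo hi : ℕ → ℝ) (W eps L : ℝ) (c : ℕ → ℝ)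
    (hlo : ∀ j, 0 ≤ lo j) (hlohi : ∀ j, lo j ≤ hi j) (hW : 0 ≤ W) (heps : 0 ≤ eps)
    (hL : L = (∑ k ∈ Finset.Icc 1 n, hi (σ k)) - W + eps)
    (sig : ℕ) (hsig1 : 1 ≤ sig) (hsig2 : sig + 1 ≤ n)
    (hchigh : ∀ i ∈ Finset.Icc 1 sig, c i = c 1)
    (hclow : ∀ i ∈ Finset.Icc (sig + 1) n, c i = c n)
    (hclt : c n < c 1) (hc : ∀ i, 0 ≤ c i)
    (lst : ℕ) (hl1 : 1 ≤ lst) (hl2 : lst ≤ n + 1)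
    (hge : W ≤ ∑ i ∈ Finset.Icc 1 (lst - 1), (hi (σ i) - lo (σ i)))
    (hmin : ∀ l, 1 ≤ l → l < lst →
      ∑ i ∈ Finset.Icc 1 (l - 1), (hi (σ i) - lo (σ i)) < W) :
    ∑ i ∈ Finset.Icc 2 (n + 1),
        c i * max (asapA11 n hi W L σ i - ubC11 n lo hi W L σ (i - 1)) 0 =
      c lst * ((∑ i ∈ Finset.Icc 1 (lst - 1), (hi (σ i) - lo (σ i))) - W) +
        (∑ i ∈ Finset.Icc (lst + 1) (n + 1), c i * (hi (σ (i - 1)) - lo (σ (i - 1)))) +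
        c (n + 1) * eps := by
  have hn2 : 2 ≤ n := by omega
  have hC := ubC_formula n lo hi W L σ hlo hlohi hW
  have hLopos : ∀ m : ℕ, (0:ℝ) ≤ ∑ k ∈ Finset.Icc 1 m, lo (σ k) :=
    fun m => Finset.sum_nonneg fun j _ => hlo (σ j)
  -- idle term for 2 ≤ i ≤ min(n, lst)
  have hterm_le : ∀ i, 2 ≤ i → i ≤ n → i ≤ lst →
      max (asapA11 n hi W L σ i - ubC11 n lo hi W L σ (i - 1)) 0 =
        max ((∑ k ∈ Finset.Icc 1 (i - 1), (hi (σ k) - lo (σ k))) - W) 0 := by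
    intro i h2 hn hil
    rw [asapA11, if_neg (by omega), hC (i - 1) (by omega) (by omega)]
    rw [show i - 1 - 1 = i - 2 from by omega, sum_split lo hi σ (i - 1)]
    have hm := hmin (i - 1) (by omega) (by omega)
    rw [show i - 1 - 1 = i - 2 from by omega] at hm
    exact max_arith1 _ _ _ _ (hLopos (i - 1)) hm
  -- idle term for lst < i ≤ n
  have hterm_gt : ∀ i, 2 ≤ i → i ≤ n → lst < i →
      max (asapA11 n hi W L σ i - ubC11 n lo hi W L σ (i - 1)) 0 =
        hi (σ (i - 1)) - lo (σ (i - 1)) := by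
    intro i h2 hn hil
    rw [asapA11, if_neg (by omega), hC (i - 1) (by omega) (by omega)]
    rw [show i - 1 - 1 = i - 2 from by omega, sum_split lo hi σ (i - 1)]
    have hWD2 : W ≤ ∑ k ∈ Finset.Icc 1 (i - 2), (hi (σ k) - lo (σ k)) :=
      le_trans hge (D_mono lo hi σ hlohi (by omega))
    have hd := D_step lo hi σ (show 1 ≤ i - 1 by omega)
    rw [show i - 1 - 1 = i - 2 from by omega] at hd
    exact max_arith2 _ _ _ _ _ (hLopos (i - 1)) hWD2 hd
      (sub_nonneg.2 (hlohi (σ (i - 1))))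
  -- the sums
  rw [Finset.sum_Icc_succ_top (by omega : 2 ≤ n + 1)]
  have hCn := hC n (by omega) (le_refl n)
  have hAlast : asapA11 n hi W L σ (n + 1) = L := by rw [asapA11, if_pos rfl]
  have hub : ubC11 n lo hi W L σ (n + 1 - 1) = ubC11 n lo hi W L σ n := by norm_num
  rcases Nat.lt_or_ge lst (n + 1) with hln | hln
  · -- case lst ≤ n
    have hlstn : lst ≤ n := by omega
    -- last term
    have hlast : max (asapA11 n hi W L σ (n + 1) - ubC11 n lo hi W L σ (n + 1 - 1)) 0 =
        (hi (σ n) - lo (σ n)) + eps := by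
      rw [hAlast, hub, hCn, hL, sum_split lo hi σ n]
      have hWD2 : W ≤ ∑ k ∈ Finset.Icc 1 (n - 1), (hi (σ k) - lo (σ k)) :=
        le_trans hge (D_mono lo hi σ hlohi (by omega))
      have hd := D_step lo hi σ (show 1 ≤ n by omega)
      exact max_arith3 _ _ _ _ _ _ hWD2 hd (sub_nonneg.2 (hlohi (σ n))) heps
    rw [hlast]
    -- split the main sum at lst
    rw [← Finset.Ico_add_one_right_eq_Icc 2 n,
      ← Finset.sum_Ico_consecutive _ (show 2 ≤ lst + 1 by omega)
        (show lst + 1 ≤ n + 1 by omega)]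
    -- first block
    have hblock1 : (∑ i ∈ Finset.Ico 2 (lst + 1),
        c i * max (asapA11 n hi W L σ i - ubC11 n lo hi W L σ (i - 1)) 0) =
        c lst * ((∑ i ∈ Finset.Icc 1 (lst - 1), (hi (σ i) - lo (σ i))) - W) := by
      rcases Nat.eq_or_lt_of_le hl1 with h1 | h1
      · -- lst = 1 : empty sum, and W = 0 with empty RHS sum
        have hW0 : W = 0 := by
          have : (∑ i ∈ Finset.Icc 1 (lst - 1), (hi (σ i) - lo (σ i))) = 0 := by
            rw [show lst - 1 = 0 from by omega,
              show Finset.Icc 1 0 = ∅ from Finset.Icc_eq_empty (by omega),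
              Finset.sum_empty]
          linarith
        rw [show Finset.Ico 2 (lst + 1) = ∅ from Finset.Ico_eq_empty (by omega),
          Finset.sum_empty, show lst - 1 = 0 from by omega,
          show Finset.Icc 1 0 = ∅ from Finset.Icc_eq_empty (by omega),
          Finset.sum_empty, hW0]
        ring
      · -- lst ≥ 2
        rw [Finset.sum_eq_single_of_mem lst (by simp [Finset.mem_Ico]; omega)]
        · rw [hterm_le lst (by omega) hlstn (le_refl lst),
            max_eq_left (by linarith : (0:ℝ) ≤ (∑ k ∈ Finset.Icc 1 (lst - 1),
              (hi (σ k) - lo (σ k))) - W)]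
        · intro b hb hbne
          rw [Finset.mem_Ico] at hb
          rw [hterm_le b hb.1 (by omega) (by omega),
            max_eq_right (by linarith [hmin b (by omega) (by omega)] :
              (∑ k ∈ Finset.Icc 1 (b - 1), (hi (σ k) - lo (σ k))) - W ≤ (0:ℝ))]
          ring
    rw [hblock1]
    -- second block
    have hblock2 : (∑ i ∈ Finset.Ico (lst + 1) (n + 1),
        c i * max (asapA11 n hi W L σ i - ubC11 n lo hi W L σ (i - 1)) 0) =
        ∑ i ∈ Finset.Ico (lst + 1) (n + 1), c i * (hi (σ (i - 1)) - lo (σ (i - 1))) := by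
      apply Finset.sum_congr rfl
      intro i hi'
      rw [Finset.mem_Ico] at hi'
      rw [hterm_gt i (by omega) (by omega) (by omega)]
    rw [hblock2]
    -- RHS sum
    rw [show Finset.Icc (lst + 1) (n + 1) = Finset.Ico (lst + 1) (n + 2) from
      (Finset.Ico_add_one_right_eq_Icc (lst + 1) (n + 1)).symm,
      Finset.sum_Ico_succ_top (show lst + 1 ≤ n + 1 by omega)]
    simp only [Nat.add_sub_cancel]
    ring
  · -- case lst = n + 1
    have hlst : lst = n + 1 := by omega
    subst hlst
    have hblock0 : (∑ i ∈ Finset.Icc 2 n,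
        c i * max (asapA11 n hi W L σ i - ubC11 n lo hi W L σ (i - 1)) 0) = 0 := by
      apply Finset.sum_eq_zero
      intro i hi'
      rw [Finset.mem_Icc] at hi'
      rw [hterm_le i hi'.1 hi'.2 (by omega),
        max_eq_right (by linarith [hmin i (by omega) (by omega)] :
          (∑ k ∈ Finset.Icc 1 (i - 1), (hi (σ k) - lo (σ k))) - W ≤ (0:ℝ))]
      ring
    rw [hblock0]
    have hlast : max (asapA11 n hi W L σ (n + 1) - ubC11 n lo hi W L σ (n + 1 - 1)) 0 =
        (∑ k ∈ Finset.Icc 1 n, (hi (σ k) - lo (σ k))) - W + eps := by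
      rw [hAlast, hub, hCn, hL, sum_split lo hi σ n]
      have hmn := hmin n (by omega) (by omega)
      rw [show n - 1 = n - 1 from rfl] at hmn
      have hgen : W ≤ ∑ k ∈ Finset.Icc 1 n, (hi (σ k) - lo (σ k)) := by
        have := hge
        rwa [show n + 1 - 1 = n from by omega] at this
      exact max_arith4 _ _ _ _ _ hmn hgen heps
    rw [hlast,
      show Finset.Icc (n + 1 + 1) (n + 1) = ∅ from Finset.Icc_eq_empty (by omega),
      Finset.sum_empty, show n + 1 - 1 = n from by omega]
    ring
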